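/- arXiv:0904.4526 — 3 statements merged into one kernel-verified Lean document; each statement's English description precedes it below -/
import Mathlib

section
/- A symmetric K-user system (M × N, d)^K with d ≤ min(M, N) is proper if and only if the total number of variables is at least the total number of equations, i.e. if and only if K·d·(M + N − 2·d) ≥ K·(K − 1)·d². -/
/-- The set of variables of a `K`-user MIMO interference alignment system:
transmit-beamformer coordinates `(j, n, i)` with `n : Fin (d j)`, `i : Fin (M j - d j)`,
together with receive-filter coordinates `(k, m, i)` with `m : Fin (d k)`,
`i : Fin (N k - d k)`. -/
abbrev IAVar (K : ℕ) (M N d : Fin K → ℕ) : Type :=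
  (Σ j : Fin K, Fin (d j) × Fin (M j - d j)) ⊕ (Σ k : Fin K, Fin (d k) × Fin (N k - d k))

/-- The set of interference alignment equations `(k, j, m, n)` with `k ≠ j`,
`m : Fin (d k)`, `n : Fin (d j)`. -/
abbrev IAEqs (K : ℕ) (d : Fin K → ℕ) : Type :=
  {p : Σ k : Fin K, Σ j : Fin K, Fin (d k) × Fin (d j) // p.1 ≠ p.2.1}

/-- The set of variables involved in the equation `(k, j, m, n)`:
all transmit variables `inl (j, n, i)` and all receive variables `inr (k, m, i)`. -/
def iaVar {K : ℕ} (M N d : Fin K → ℕ) (e : IAEqs K d) : Finset (IAVar K M N d) :=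
  (Finset.univ.image fun i : Fin (M e.1.2.1 - d e.1.2.1) =>
      Sum.inl ⟨e.1.2.1, (e.1.2.2.2, i)⟩)
  ∪ (Finset.univ.image fun i : Fin (N e.1.1 - d e.1.1) =>
      Sum.inr ⟨e.1.1, (e.1.2.2.1, i)⟩)

/-- A system is proper if every subset of equations involves at least as many
variables as equations. -/
def IsProper (K : ℕ) (M N d : Fin K → ℕ) : Prop :=
  ∀ S : Finset (IAEqs K d), S.card ≤ (S.biUnion (iaVar M N d)).card

namespace IAHelp

variable (K M N d : ℕ)

/-- Transmit-block label of an equation. -/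
def fTx (e : IAEqs K (fun _ => d)) : Fin K × Fin d := (e.1.2.1, e.1.2.2.2)

/-- Receive-block label of an equation. -/
def fRx (e : IAEqs K (fun _ => d)) : Fin K × Fin d := (e.1.1, e.1.2.2.1)

def txF (p : (Fin K × Fin d) × Fin (M - d)) :
    IAVar K (fun _ => M) (fun _ => N) (fun _ => d) :=
  Sum.inl ⟨p.1.1, (p.1.2, p.2)⟩

def rxF (p : (Fin K × Fin d) × Fin (N - d)) :
    IAVar K (fun _ => M) (fun _ => N) (fun _ => d) :=
  Sum.inr ⟨p.1.1, (p.1.2, p.2)⟩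

lemma txF_inj : Function.Injective (txF K M N d) := by
  rintro ⟨⟨a, b⟩, c⟩ ⟨⟨a', b'⟩, c'⟩ h
  unfold txF at h
  injection h with h1
  injection h1 with ha hb
  subst ha
  exact congrArg (fun z => ((a, z.1), z.2)) hb

lemma rxF_inj : Function.Injective (rxF K M N d) := by
  rintro ⟨⟨a, b⟩, c⟩ ⟨⟨a', b'⟩, c'⟩ h
  unfold rxF at h
  injection h with h1
  injection h1 with ha hb
  subst ha
  exact congrArg (fun z => ((a, z.1), z.2)) hb

def txBlock (x : Fin K × Fin d) :
    Finset (IAVar K (fun _ => M) (fun _ => N) (fun _ => d)) :=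
  Finset.univ.image fun i : Fin (M - d) => txF K M N d (x, i)

def rxBlock (x : Fin K × Fin d) :
    Finset (IAVar K (fun _ => M) (fun _ => N) (fun _ => d)) :=
  Finset.univ.image fun i : Fin (N - d) => rxF K M N d (x, i)

lemma iaVar_eq (e : IAEqs K (fun _ => d)) :
    iaVar (fun _ => M) (fun _ => N) (fun _ => d) e =
      txBlock K M N d (fTx K d e) ∪ rxBlock K M N d (fRx K d e) := rfl

lemma biUnion_eq (S : Finset (IAEqs K (fun _ => d))) :
    S.biUnion (iaVar (fun _ => M) (fun _ => N) (fun _ => d)) =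
      (S.image (fTx K d)).biUnion (txBlock K M N d) ∪
      (S.image (fRx K d)).biUnion (rxBlock K M N d) := by
  ext v
  simp only [Finset.mem_biUnion, Finset.mem_union, Finset.mem_image, iaVar_eq]
  constructor
  · rintro ⟨e, he, hv | hv⟩
    · exact Or.inl ⟨_, ⟨e, he, rfl⟩, hv⟩
    · exact Or.inr ⟨_, ⟨e, he, rfl⟩, hv⟩
  · rintro (⟨x, ⟨e, he, rfl⟩, hv⟩ | ⟨x, ⟨e, he, rfl⟩, hv⟩)
    · exact ⟨e, he, Or.inl hv⟩
    · exact ⟨e, he, Or.inr hv⟩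

lemma card_txBlock (x : Fin K × Fin d) : (txBlock K M N d x).card = M - d := by
  rw [txBlock, Finset.card_image_of_injective _
    (fun i j h => by have := txF_inj K M N d h; simpa using this)]
  simp

lemma card_rxBlock (x : Fin K × Fin d) : (rxBlock K M N d x).card = N - d := by
  rw [rxBlock, Finset.card_image_of_injective _
    (fun i j h => by have := rxF_inj K M N d h; simpa using this)]
  simp

lemma card_biUnion_tx (A : Finset (Fin K × Fin d)) :
    (A.biUnion (txBlock K M N d)).card = A.card * (M - d) := by
  rw [Finset.card_biUnion]
  · simp [card_txBlock, Finset.sum_const, mul_comm]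
  · intro x hx y hy hxy
    simp only [Finset.disjoint_left, txBlock, Finset.mem_image, Finset.mem_univ,
      true_and]
    rintro a ⟨i, rfl⟩ ⟨j, hj⟩
    exact hxy (congrArg Prod.fst (txF_inj K M N d hj)).symm

lemma card_biUnion_rx (A : Finset (Fin K × Fin d)) :
    (A.biUnion (rxBlock K M N d)).card = A.card * (N - d) := by
  rw [Finset.card_biUnion]
  · simp [card_rxBlock, Finset.sum_const, mul_comm]
  · intro x hx y hy hxy
    simp only [Finset.disjoint_left, rxBlock, Finset.mem_image, Finset.mem_univ,
      true_and]
    rintro a ⟨i, rfl⟩ ⟨j, hj⟩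
    exact hxy (congrArg Prod.fst (rxF_inj K M N d hj)).symm

lemma card_vars (S : Finset (IAEqs K (fun _ => d))) :
    (S.biUnion (iaVar (fun _ => M) (fun _ => N) (fun _ => d))).card =
      (S.image (fTx K d)).card * (M - d) + (S.image (fRx K d)).card * (N - d) := by
  rw [biUnion_eq, Finset.card_union_of_disjoint, card_biUnion_tx, card_biUnion_rx]
  simp only [Finset.disjoint_left, Finset.mem_biUnion, txBlock, rxBlock,
    Finset.mem_image, Finset.mem_univ, true_and]
  rintro a ⟨x, hx, i, rfl⟩ ⟨y, hy, j, hj⟩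
  exact absurd hj (by simp [txF, rxF])

lemma eq_ext {e e' : IAEqs K (fun _ => d)}
    (h1 : fTx K d e = fTx K d e') (h2 : fRx K d e = fRx K d e') : e = e' := by
  obtain ⟨⟨k, j, m, n⟩, he⟩ := e
  obtain ⟨⟨k', j', m', n'⟩, he'⟩ := e'
  simp only [fTx, fRx, Prod.mk.injEq] at h1 h2
  obtain ⟨hj, hn⟩ := h1
  obtain ⟨hk, hm⟩ := h2
  subst hj; subst hn; subst hk; subst hm; rfl

lemma card_le_tx (S : Finset (IAEqs K (fun _ => d))) :
    S.card ≤ (K - 1) * d * (S.image (fTx K d)).card := by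
  apply Finset.card_le_mul_card_image
  intro b hb
  have hsub : ∀ e ∈ S.filter (fun e => fTx K d e = b), fRx K d e ∈
      ((Finset.univ.erase b.1) ×ˢ (Finset.univ : Finset (Fin d))) := by
    intro e he
    simp only [Finset.mem_filter] at he
    simp only [Finset.mem_product, Finset.mem_erase, Finset.mem_univ, and_true]
    intro hk
    apply e.2
    have : e.1.2.1 = b.1 := congrArg Prod.fst he.2
    rw [show (fRx K d e).1 = e.1.1 from rfl] at hk
    rw [hk, ← this]
  have := Finset.card_le_card_of_injOn (fRx K d) hsub ?_
  · calc (S.filter (fun e => fTx K d e = b)).card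
        ≤ ((Finset.univ.erase b.1) ×ˢ (Finset.univ : Finset (Fin d))).card := this
      _ = (K - 1) * d := by
        rw [Finset.card_product, Finset.card_erase_of_mem (Finset.mem_univ _)]
        simp
  · intro e he e' he' hr
    simp only [Finset.coe_filter, Set.mem_setOf_eq] at he he'
    exact eq_ext K d (he.2.trans he'.2.symm) hr

lemma card_le_rx (S : Finset (IAEqs K (fun _ => d))) :
    S.card ≤ (K - 1) * d * (S.image (fRx K d)).card := by
  apply Finset.card_le_mul_card_image
  intro b hb
  have hsub : ∀ e ∈ S.filter (fun e => fRx K d e = b), fTx K d e ∈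
      ((Finset.univ.erase b.1) ×ˢ (Finset.univ : Finset (Fin d))) := by
    intro e he
    simp only [Finset.mem_filter] at he
    simp only [Finset.mem_product, Finset.mem_erase, Finset.mem_univ, and_true]
    intro hk
    apply e.2
    have : e.1.1 = b.1 := congrArg Prod.fst he.2
    rw [show (fTx K d e).1 = e.1.2.1 from rfl] at hk
    rw [this, ← hk]
  have := Finset.card_le_card_of_injOn (fTx K d) hsub ?_
  · calc (S.filter (fun e => fRx K d e = b)).card
        ≤ ((Finset.univ.erase b.1) ×ˢ (Finset.univ : Finset (Fin d))).card := this
      _ = (K - 1) * d := by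
        rw [Finset.card_product, Finset.card_erase_of_mem (Finset.mem_univ _)]
        simp
  · intro e he e' he' hr
    simp only [Finset.coe_filter, Set.mem_setOf_eq] at he he'
    exact eq_ext K d hr (he.2.trans he'.2.symm)

/-- Equations of the symmetric system in bijection with off-diagonal pairs times stream pairs. -/
def eqEquiv : IAEqs K (fun _ => d) ≃ {p : Fin K × Fin K // p.1 ≠ p.2} × (Fin d × Fin d) where
  toFun e := (⟨(e.1.1, e.1.2.1), e.2⟩, e.1.2.2)
  invFun x := ⟨⟨x.1.1.1, x.1.1.2, x.2⟩, x.1.2⟩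
  left_inv := by rintro ⟨⟨k, j, m, n⟩, h⟩; rfl
  right_inv := by rintro ⟨⟨⟨k, j⟩, h⟩, ⟨m, n⟩⟩; rfl

lemma card_eqs : Fintype.card (IAEqs K (fun _ => d)) = K * (K - 1) * d ^ 2 := by
  rw [Fintype.card_congr (eqEquiv K d), Fintype.card_prod, Fintype.card_prod]
  have h1 : Fintype.card {p : Fin K × Fin K // p.1 ≠ p.2} = K * K - K := by
    rw [Fintype.card_subtype]
    have : (Finset.univ.filter fun p : Fin K × Fin K => p.1 ≠ p.2) =
        (Finset.univ : Finset (Fin K)).offDiag := by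
      ext p
      simp [Finset.mem_offDiag]
    rw [this, Finset.offDiag_card]
    simp
  rw [h1]
  simp only [Fintype.card_fin]
  rw [pow_two, Nat.mul_sub, mul_one]

end IAHelp

/-- A symmetric system `(M × N, d)^K` with `d ≤ min M N` is proper if and only if the
total number of variables `N_v = K * d * (M + N - 2 * d)` is at least the total number
of equations `N_e = K * (K - 1) * d ^ 2`. -/
theorem symmetric_proper_iff_vars_ge_eqs (K M N d : ℕ) (hd : d ≤ min M N) :
    IsProper K (fun _ => M) (fun _ => N) (fun _ => d) ↔
      K * (K - 1) * d ^ 2 ≤ K * d * (M + N - 2 * d) := by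
  have hdM : d ≤ M := le_trans hd (min_le_left _ _)
  have hdN : d ≤ N := le_trans hd (min_le_right _ _)
  constructor
  · intro hp
    have h := hp Finset.univ
    rw [Finset.card_univ, IAHelp.card_eqs] at h
    have h2 : ((Finset.univ : Finset (IAEqs K (fun _ => d))).biUnion
          (iaVar (fun _ => M) (fun _ => N) (fun _ => d))).card
        ≤ Fintype.card (IAVar K (fun _ => M) (fun _ => N) (fun _ => d)) :=
      Finset.card_le_univ _
    have h3 : Fintype.card (IAVar K (fun _ => M) (fun _ => N) (fun _ => d))
        = K * d * (M + N - 2 * d) := by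
      have e1 : (M - d) + (N - d) = M + N - 2 * d := by omega
      simp only [IAVar, Fintype.card_sum, Fintype.card_sigma, Fintype.card_prod,
        Fintype.card_fin, Finset.sum_const, Finset.card_univ, smul_eq_mul]
      rw [← e1, Nat.mul_add]
      ring
    exact le_trans h (h3 ▸ h2)
  · intro hle S
    by_cases hKd : 2 ≤ K ∧ 1 ≤ d
    · obtain ⟨hK2, hd1⟩ := hKd
      have hK0 : 0 < K := by omega
      have hKey : (K - 1) * d ≤ (M - d) + (N - d) := by
        have h1 : K * ((K - 1) * d * d) ≤ K * (d * (M + N - 2 * d)) := by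
          calc K * ((K - 1) * d * d) = K * (K - 1) * d ^ 2 := by ring
            _ ≤ K * d * (M + N - 2 * d) := hle
            _ = K * (d * (M + N - 2 * d)) := by ring
        have h2 := Nat.le_of_mul_le_mul_left h1 hK0
        have h3 : ((K - 1) * d) * d ≤ (M + N - 2 * d) * d := by
          calc ((K - 1) * d) * d = (K - 1) * d * d := by ring
            _ ≤ d * (M + N - 2 * d) := h2
            _ = (M + N - 2 * d) * d := by ring
        have h4 := Nat.le_of_mul_le_mul_right h3 hd1
        omega
      rw [IAHelp.card_vars]
      set a := (S.image (IAHelp.fTx K d)).card with ha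
      set b := (S.image (IAHelp.fRx K d)).card with hb
      have hta : S.card ≤ (K - 1) * d * a := IAHelp.card_le_tx K d S
      have htb : S.card ≤ (K - 1) * d * b := IAHelp.card_le_rx K d S
      rcases le_total a b with hab | hab
      · calc S.card ≤ (K - 1) * d * a := hta
          _ ≤ ((M - d) + (N - d)) * a := Nat.mul_le_mul_right a hKey
          _ = a * (M - d) + a * (N - d) := by ring
          _ ≤ a * (M - d) + b * (N - d) :=
            Nat.add_le_add_left (Nat.mul_le_mul_right _ hab) _
      · calc S.card ≤ (K - 1) * d * b := htb
          _ ≤ ((M - d) + (N - d)) * b := Nat.mul_le_mul_right b hKey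
          _ = b * (M - d) + b * (N - d) := by ring
          _ ≤ a * (M - d) + b * (N - d) :=
            Nat.add_le_add_right (Nat.mul_le_mul_right _ hab) _
    · have hempty : ∀ e : IAEqs K (fun _ => d), False := by
        intro e
        rcases Nat.lt_or_ge K 2 with hK | hK
        · have h1 := e.1.1.isLt
          have h2 := e.1.2.1.isLt
          exact e.2 (Fin.ext (by omega))
        · have hd0 : d = 0 := by omega
          have : ((e.1.2.2.1 : Fin d) : ℕ) < d := e.1.2.2.1.isLt
          omega
      have hS : S = ∅ := Finset.eq_empty_of_forall_notMem fun e _ => hempty e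
      simp [hS]
end

section
/- A symmetric K-user system (M × N, d)^K with d ≤ min(M, N) is proper if and only if M + N − (K + 1)·d ≥ 0, i.e. if and only if M + N ≥ (K + 1)·d. -/
/-! Taking all equations at once forces `K (K - 1) d² ≤ K d ((M - d) + (N - d))`. Conversely, an
equation `(k, j, m, n)` is determined by its transmit stream `(j, n)` and its receive stream
`(k, m)`, and each stream lies in at most `(K - 1) d` equations. So a set of equations touching
`t` transmit and `r` receive streams has at most `(K - 1) d · min t r ≤ (M - d) t + (N - d) r`
elements, and the right-hand side is exactly the number of variables it involves. -/

open Finset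

theorem Finset.card_le_card_image_mul_add_card_image_mul {α β γ : Type*} [DecidableEq β]
    [DecidableEq γ] (s : Finset α) (f : α → β) (g : α → γ) {n a b : ℕ} (hn : n ≤ a + b)
    (hf : ∀ y, #{x ∈ s | f x = y} ≤ n) (hg : ∀ z, #{x ∈ s | g x = z} ≤ n) :
    #s ≤ #(s.image f) * a + #(s.image g) * b := by
  have hsf := card_le_mul_card_image s n fun y _ => hf y
  have hsg := card_le_mul_card_image s n fun z _ => hg z
  rcases le_total #(s.image f) #(s.image g) with h | h <;> nlinarith

namespace IAEqs

variable {K : ℕ} {d : Fin K → ℕ}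

-- The equation `(k, j, m, n)` has transmit stream `(j, n)` and receive stream `(k, m)`.
def txStream (e : IAEqs K d) : Σ j : Fin K, Fin (d j) := ⟨e.1.2.1, e.1.2.2.2⟩

def rxStream (e : IAEqs K d) : Σ k : Fin K, Fin (d k) := ⟨e.1.1, e.1.2.2.1⟩

theorem txStream_rxStream_injective :
    Function.Injective fun e : IAEqs K d => (e.txStream, e.rxStream) := by
  rintro ⟨⟨k, j, m, n⟩, h⟩ ⟨⟨k', j', m', n'⟩, h'⟩ heq
  simp only [txStream, rxStream, Prod.mk.injEq, Sigma.mk.injEq] at heq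
  obtain ⟨⟨rfl, hn⟩, rfl, hm⟩ := heq
  cases eq_of_heq hn
  cases eq_of_heq hm
  rfl

theorem card_filter_txStream_eq_le (S : Finset (IAEqs K d)) (s : Σ j : Fin K, Fin (d j)) :
    #{e ∈ S | e.txStream = s} ≤ ∑ k ∈ univ.erase s.1, d k := by
  calc #{e ∈ S | e.txStream = s}
      ≤ #((univ.erase s.1).sigma fun k => (univ : Finset (Fin (d k)))) := by
        refine card_le_card_of_injOn rxStream (fun e he => ?_) fun e he e' he' h => ?_
        · simp only [mem_coe, mem_filter] at he
          simp [← he.2, txStream, rxStream, e.2]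
        · simp only [mem_coe, mem_filter] at he he'
          exact txStream_rxStream_injective (Prod.ext (he.2.trans he'.2.symm) h)
    _ = ∑ k ∈ univ.erase s.1, d k := by simp

theorem card_filter_rxStream_eq_le (S : Finset (IAEqs K d)) (s : Σ k : Fin K, Fin (d k)) :
    #{e ∈ S | e.rxStream = s} ≤ ∑ j ∈ univ.erase s.1, d j := by
  calc #{e ∈ S | e.rxStream = s}
      ≤ #((univ.erase s.1).sigma fun j => (univ : Finset (Fin (d j)))) := by
        refine card_le_card_of_injOn txStream (fun e he => ?_) fun e he e' he' h => ?_
        · simp only [mem_coe, mem_filter] at he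
          simp [← he.2, txStream, rxStream, Ne.symm e.2]
        · simp only [mem_coe, mem_filter] at he he'
          exact txStream_rxStream_injective (Prod.ext h (he.2.trans he'.2.symm))
    _ = ∑ j ∈ univ.erase s.1, d j := by simp

theorem card_symmetric (K d : ℕ) : Fintype.card (IAEqs K fun _ => d) = K * ((K - 1) * (d * d)) := by
  let e : (IAEqs K fun _ => d) ≃ Σ k : Fin K, {j // j ≠ k} × (Fin d × Fin d) :=
    { toFun := fun p => ⟨p.1.1, ⟨p.1.2.1, p.2.symm⟩, p.1.2.2⟩
      invFun := fun q => ⟨⟨q.1, q.2.1.1, q.2.2⟩, q.2.1.2.symm⟩ }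
  simp [Fintype.card_congr e, Fintype.card_subtype_compl]

end IAEqs

section

variable {K : ℕ} (M N : Fin K → ℕ) {d : Fin K → ℕ}

def txVars (s : Σ j : Fin K, Fin (d j)) : Finset (IAVar K M N d) :=
  univ.image fun i : Fin (M s.1 - d s.1) => Sum.inl ⟨s.1, (s.2, i)⟩

def rxVars (s : Σ k : Fin K, Fin (d k)) : Finset (IAVar K M N d) :=
  univ.image fun i : Fin (N s.1 - d s.1) => Sum.inr ⟨s.1, (s.2, i)⟩

theorem iaVar_eq_txVars_union_rxVars :
    iaVar M N d = fun e => txVars M N e.txStream ∪ rxVars M N e.rxStream :=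
  rfl

theorem card_txVars (s : Σ j : Fin K, Fin (d j)) : #(txVars M N s) = M s.1 - d s.1 := by
  rw [txVars, card_image_of_injective _ fun i i' h => by simpa using h, card_univ, Fintype.card_fin]

theorem card_rxVars (s : Σ k : Fin K, Fin (d k)) : #(rxVars M N s) = N s.1 - d s.1 := by
  rw [rxVars, card_image_of_injective _ fun i i' h => by simpa using h, card_univ, Fintype.card_fin]

theorem disjoint_txVars {s s' : Σ j : Fin K, Fin (d j)} (h : s ≠ s') :
    Disjoint (txVars M N s) (txVars M N s') := by
  obtain ⟨j, n⟩ := s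
  obtain ⟨j', n'⟩ := s'
  simp only [txVars, disjoint_left, mem_image, mem_univ, true_and, not_exists]
  rintro _ ⟨i, rfl⟩ i' h'
  simp only [Sum.inl.injEq, Sigma.mk.injEq] at h'
  obtain ⟨rfl, h'⟩ := h'
  simp_all

theorem disjoint_rxVars {s s' : Σ k : Fin K, Fin (d k)} (h : s ≠ s') :
    Disjoint (rxVars M N s) (rxVars M N s') := by
  obtain ⟨k, m⟩ := s
  obtain ⟨k', m'⟩ := s'
  simp only [rxVars, disjoint_left, mem_image, mem_univ, true_and, not_exists]
  rintro _ ⟨i, rfl⟩ i' h'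
  simp only [Sum.inr.injEq, Sigma.mk.injEq] at h'
  obtain ⟨rfl, h'⟩ := h'
  simp_all

theorem disjoint_txVars_rxVars (s s' : Σ j : Fin K, Fin (d j)) :
    Disjoint (txVars M N s) (rxVars M N s') := by
  simp [txVars, rxVars, disjoint_left]

theorem card_biUnion_iaVar (S : Finset (IAEqs K d)) :
    #(S.biUnion (iaVar M N d)) = ∑ s ∈ S.image IAEqs.txStream, (M s.1 - d s.1)
      + ∑ s ∈ S.image IAEqs.rxStream, (N s.1 - d s.1) := by
  rw [iaVar_eq_txVars_union_rxVars, biUnion_union, ← image_biUnion (t := txVars M N),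
    ← image_biUnion (t := rxVars M N), card_union_of_disjoint, card_biUnion, card_biUnion]
  · simp only [card_txVars, card_rxVars]
  · exact fun s _ s' _ => disjoint_rxVars M N
  · exact fun s _ s' _ => disjoint_txVars M N
  · simp only [disjoint_biUnion_left, disjoint_biUnion_right]
    exact fun s _ s' _ => disjoint_txVars_rxVars M N s' s

end

theorem IsProper.card_le_card {K : ℕ} {M N d : Fin K → ℕ} (h : IsProper K M N d) :
    Fintype.card (IAEqs K d) ≤ Fintype.card (IAVar K M N d) :=
  (h univ).trans (card_le_univ _)

/-- **Theorem 2 of the paper.** A symmetric system `(M × N, d)^K` with `d ≤ min M N`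
is proper if and only if `M + N - (K + 1) * d ≥ 0`, i.e. `M + N ≥ (K + 1) * d`. -/
theorem symmetric_proper_iff (K M N d : ℕ) (hd : d ≤ min M N) :
    IsProper K (fun _ => M) (fun _ => N) (fun _ => d) ↔ (K + 1) * d ≤ M + N := by
  obtain ⟨hdM, hdN⟩ := le_min_iff.1 hd
  constructor
  · intro hp
    have hcard := hp.card_le_card
    simp only [IAEqs.card_symmetric, Fintype.card_sum, Fintype.card_sigma, Fintype.card_prod,
      Fintype.card_fin, sum_const, card_univ, smul_eq_mul] at hcard
    rcases K with _ | k
    · omega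
    rcases Nat.eq_zero_or_pos d with rfl | hd0
    · simp
    have hk : k * d ≤ M - d + (N - d) := by
      refine Nat.le_of_mul_le_mul_left (c := (k + 1) * d) ?_ (Nat.mul_pos k.succ_pos hd0)
      rw [add_tsub_cancel_right] at hcard
      linarith
    rw [add_mul, add_mul]
    omega
  · intro h S
    rw [card_biUnion_iaVar]
    simp only [sum_const, smul_eq_mul]
    refine card_le_card_image_mul_add_card_image_mul S _ _ (n := (K - 1) * d) ?_
      (fun s => by simpa using IAEqs.card_filter_txStream_eq_le S s)
      (fun s => by simpa using IAEqs.card_filter_rxStream_eq_le S s)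
    rcases K with _ | k
    · simp
    rw [add_tsub_cancel_right]
    rw [add_mul, add_mul] at h
    omega
end

section
/- The two-user system (2 × 1, 1)(1 × 2, 1) — i.e. K = 2 with (M_1, N_1, d_1) = (2, 1, 1) and (M_2, N_2, d_2) = (1, 2, 1) — satisfies N_v = N_e (both equal 2), yet it is improper: the singleton set consisting of the equation (k, j, m, n) = (1, 2, 1, 1) has cardinality 1 while its variable set var(1,2,1,1) is empty. Hence the condition N_v ≥ N_e does not suffice for properness of a general (asymmetric) system. -/
/-- The two-user system `(2 × 1, 1)(1 × 2, 1)`: transmit antennas. -/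
def exM : Fin 2 → ℕ := ![2, 1]
/-- Receive antennas. -/
def exN : Fin 2 → ℕ := ![1, 2]
/-- Degrees-of-freedom demands. -/
def exd : Fin 2 → ℕ := ![1, 1]

/-- The equation `(k, j, m, n) = (1, 2, 1, 1)` (0-indexed: `k = 0`, `j = 1`), connecting
receiver 1 (one antenna) and transmitter 2 (one antenna). -/
def exEq : IAEqs 2 exd :=
  ⟨⟨0, 1, (⟨0, by decide⟩, ⟨0, by decide⟩)⟩, by decide⟩

/-- The system `(2 × 1, 1)(1 × 2, 1)` satisfies `N_v = N_e = 2`, yet it is improper: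
the single equation `(1, 2, 1, 1)` involves an empty set of variables. Hence
`N_v ≥ N_e` does not suffice for properness of a general asymmetric system. -/
theorem counterexample_2x1_1x2 :
    (∑ k, exd k * (exM k + exN k - 2 * exd k) = 2) ∧
    (∑ k, ∑ j ∈ Finset.univ.filter (fun j => j ≠ k), exd k * exd j = 2) ∧
    iaVar exM exN exd exEq = ∅ ∧
    ({exEq} : Finset (IAEqs 2 exd)).card = 1 ∧
    ¬ IsProper 2 exM exN exd := by
  have hvar : iaVar exM exN exd exEq = ∅ := by decide
  refine ⟨by decide, by decide, hvar, rfl, ?_⟩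
  intro h
  have := h {exEq}
  simp [hvar] at this
end
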